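/- Let σ be a measure on a set Σ, let 𝒟 be a countable family of measurable subsets of Σ such that the maximal elements of any subfamily of 𝒟 are pairwise disjoint and every member of a subfamily is contained in a maximal one (e.g. 𝒟 a dyadic lattice). Let a : 𝒟 → [0, ∞) satisfy the Carleson packing condition Σ_{Q ∈ 𝒟 : Q ⊆ S} a(Q) ≤ A σ(S) for every S ∈ 𝒟, and let b : 𝒟 → [0, ∞). Define b*(ζ) = sup{ b(Q) : Q ∈ 𝒟, ζ ∈ Q } (with sup ∅ = 0). Then Σ_{Q ∈ 𝒟} a(Q) b(Q) ≤ A ∫_Σ b* dσ. -/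

import Mathlib

/-!
By the layer cake formula, `∑ a(Q) b(Q) = ∫₀^∞ ∑_{b(Q) > λ} a(Q) dλ`. For a fixed level `λ`,
every `Q` with `b(Q) > λ` lies in a maximal such set; the maximal ones are pairwise disjoint and
contained in `{b* > λ}`, so the packing condition applied to each of them bounds the inner sum by
`A σ{b* > λ}`. Integrating in `λ` and using the layer cake formula for `b*` gives `A ∫ b* dσ`.
-/

open MeasureTheory Set
open scoped ENNReal

theorem volume_setOf_ofReal_lt_inter_Ioi (x : ℝ≥0∞) :
    volume ({t : ℝ | ENNReal.ofReal t < x} ∩ Ioi 0) = x := by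
  rcases eq_or_ne x ∞ with rfl | hx
  · simp
  · have : {t : ℝ | ENNReal.ofReal t < x} ∩ Ioi 0 = Ioo 0 x.toReal := by
      ext t
      simp only [mem_inter_iff, mem_ofPred_eq, mem_Ioi, mem_Ioo]
      exact ⟨fun ⟨h, ht⟩ => ⟨ht, (ENNReal.ofReal_lt_iff_lt_toReal ht.le hx).1 h⟩,
        fun ⟨ht, h⟩ => ⟨(ENNReal.ofReal_lt_iff_lt_toReal ht.le hx).2 h, ht⟩⟩
    rw [this, Real.volume_Ioo, sub_zero, ENNReal.ofReal_toReal hx]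

theorem setLIntegral_Ioi_indicator_ofReal_lt (c x : ℝ≥0∞) :
    ∫⁻ t in Ioi (0 : ℝ), {t : ℝ | ENNReal.ofReal t < x}.indicator (fun _ => c) t = c * x := by
  have hmeas : MeasurableSet {t : ℝ | ENNReal.ofReal t < x} :=
    measurableSet_lt ENNReal.measurable_ofReal measurable_const
  rw [lintegral_indicator_const hmeas, Measure.restrict_apply hmeas,
    volume_setOf_ofReal_lt_inter_Ioi]

theorem setLIntegral_Ioi_measure_ofReal_lt_le_lintegral {α : Type*} [MeasurableSpace α]
    (μ : Measure α) {g : α → ℝ≥0∞} (hg : Measurable g) :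
    ∫⁻ t in Ioi (0 : ℝ), μ {x | ENNReal.ofReal t < g x} ≤ ∫⁻ x, g x ∂μ := by
  by_cases htop : ∫⁻ x, g x ∂μ = ∞
  · exact htop ▸ le_top
  -- `g` is then a.e. finite, so the real-valued layer cake formula applies to `g.toReal`.
  have hfin : ∀ᵐ x ∂μ, g x < ∞ := ae_lt_top hg htop
  have hreal : ∫⁻ x, g x ∂μ = ∫⁻ x, ENNReal.ofReal (g x).toReal ∂μ :=
    lintegral_congr_ae <| hfin.mono fun x hx => (ENNReal.ofReal_toReal hx.ne).symm
  rw [hreal, lintegral_eq_lintegral_meas_lt μ (.of_forall fun _ => ENNReal.toReal_nonneg)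
    hg.ennreal_toReal.aemeasurable]
  refine setLIntegral_mono' measurableSet_Ioi fun t (ht : 0 < t) => measure_mono_ae ?_
  filter_upwards [hfin] with x hx hlt
  exact (ENNReal.ofReal_lt_iff_lt_toReal ht.le hx.ne).1 hlt

section Carleson

variable {X : Type*} {𝒟 : Set (Set X)}

def HasDisjointMaximalCovers (𝒟 : Set (Set X)) : Prop :=
  ∀ 𝒮 : Set (Set X), 𝒮 ⊆ 𝒟 →
    ((∀ P ∈ 𝒮, ∀ P' ∈ 𝒮, (∀ T ∈ 𝒮, P ⊆ T → T = P) → (∀ T ∈ 𝒮, P' ⊆ T → T = P') →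
        P ≠ P' → Disjoint P P') ∧
      ∀ Q ∈ 𝒮, ∃ P ∈ 𝒮, Q ⊆ P ∧ ∀ T ∈ 𝒮, P ⊆ T → T = P)

noncomputable def maximalFunction (𝒟 : Set (Set X)) (b : Set X → ℝ≥0∞) (ζ : X) : ℝ≥0∞ :=
  ⨆ Q : {Q : Set X // Q ∈ 𝒟 ∧ ζ ∈ Q}, b Q.1

theorem le_maximalFunction {b : Set X → ℝ≥0∞} {Q : Set X} {ζ : X} (hQ : Q ∈ 𝒟) (hζ : ζ ∈ Q) :
    b Q ≤ maximalFunction 𝒟 b ζ :=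
  le_iSup (fun R : {R : Set X // R ∈ 𝒟 ∧ ζ ∈ R} => b R.1) ⟨Q, hQ, hζ⟩

theorem maximalFunction_eq_iSup_indicator (b : Set X → ℝ≥0∞) :
    maximalFunction 𝒟 b = fun ζ => ⨆ Q : 𝒟, Q.1.indicator (fun _ => b Q) ζ := by
  funext ζ
  refine le_antisymm (iSup_le fun Q => ?_) (iSup_le fun Q => ?_)
  · exact le_iSup_of_le ⟨Q.1, Q.2.1⟩ (indicator_of_mem Q.2.2 fun _ => b Q.1).ge
  · by_cases hζ : ζ ∈ Q.1
    · exact (indicator_of_mem hζ _).trans_le (le_maximalFunction Q.2 hζ)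
    · simp [hζ]

theorem measurable_maximalFunction [MeasurableSpace X] (h𝒟 : 𝒟.Countable)
    (hmeas : ∀ Q ∈ 𝒟, MeasurableSet Q) (b : Set X → ℝ≥0∞) :
    Measurable (maximalFunction 𝒟 b) := by
  have : Countable 𝒟 := h𝒟.to_subtype
  rw [maximalFunction_eq_iSup_indicator]
  exact Measurable.iSup fun Q => measurable_const.indicator (hmeas Q.1 Q.2)

theorem tsum_le_mul_measure_sUnion_of_forall_subset [MeasurableSpace X] (σ : Measure X)
    {a : Set X → ℝ≥0∞} {A : ℝ≥0∞}
    (hpack : ∀ S ∈ 𝒟, ∑' Q : {Q : Set X // Q ∈ 𝒟 ∧ Q ⊆ S}, a Q.1 ≤ A * σ S)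
    {𝒮 ℳ : Set (Set X)} (h𝒮 : 𝒮 ⊆ 𝒟) (hℳ : ℳ ⊆ 𝒟) (hℳc : ℳ.Countable)
    (hℳm : ∀ P ∈ ℳ, MeasurableSet P) (hℳd : ℳ.Pairwise Disjoint)
    (hcover : ∀ Q ∈ 𝒮, ∃ P ∈ ℳ, Q ⊆ P) :
    ∑' Q : 𝒮, a Q ≤ A * σ (⋃₀ ℳ) := by
  choose P hPℳ hQP using hcover
  let i : 𝒮 → (P : ℳ) × {Q : Set X // Q ∈ 𝒟 ∧ Q ⊆ P} :=
    fun Q => ⟨⟨P Q Q.2, hPℳ Q Q.2⟩, ⟨Q, h𝒮 Q.2, hQP Q Q.2⟩⟩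
  have hi : i.Injective := fun Q R h => Subtype.ext (congrArg (fun y => y.2.1) h)
  calc ∑' Q : 𝒮, a Q
      ≤ ∑' y : (P : ℳ) × {Q : Set X // Q ∈ 𝒟 ∧ Q ⊆ P}, a y.2 :=
        ENNReal.tsum_comp_le_tsum_of_injective hi fun y => a y.2
    _ = ∑' (P : ℳ) (Q : {Q : Set X // Q ∈ 𝒟 ∧ Q ⊆ P}), a Q := ENNReal.tsum_sigma' _
    _ ≤ ∑' P : ℳ, A * σ P := ENNReal.tsum_le_tsum fun P => hpack P (hℳ P.2)
    _ = A * σ (⋃₀ ℳ) := by rw [ENNReal.tsum_mul_left, measure_sUnion hℳc hℳd hℳm]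

theorem tsum_indicator_lt_le_mul_measure_lt_maximalFunction [MeasurableSpace X] {σ : Measure X}
    (h𝒟 : 𝒟.Countable) (hmeas : ∀ Q ∈ 𝒟, MeasurableSet Q) (hmax : HasDisjointMaximalCovers 𝒟)
    {a : Set X → ℝ≥0∞} {A : ℝ≥0∞}
    (hpack : ∀ S ∈ 𝒟, ∑' Q : {Q : Set X // Q ∈ 𝒟 ∧ Q ⊆ S}, a Q.1 ≤ A * σ S)
    (b : Set X → ℝ≥0∞) (lam : ℝ≥0∞) :
    ∑' Q : 𝒟, {Q | lam < b Q}.indicator a Q ≤ A * σ {ζ | lam < maximalFunction 𝒟 b ζ} := by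
  set 𝒮 := 𝒟 ∩ {Q | lam < b Q}
  obtain ⟨hdisj, hcover⟩ := hmax 𝒮 inter_subset_left
  set ℳ := {P ∈ 𝒮 | ∀ T ∈ 𝒮, P ⊆ T → T = P}
  have hℳ : ℳ ⊆ 𝒟 := fun P hP => hP.1.1
  calc ∑' Q : 𝒟, {Q | lam < b Q}.indicator a Q
      = ∑' Q : 𝒮, a Q := by rw [tsum_subtype, tsum_subtype, indicator_indicator]
    _ ≤ A * σ (⋃₀ ℳ) :=
        tsum_le_mul_measure_sUnion_of_forall_subset σ hpack inter_subset_left hℳ (h𝒟.mono hℳ)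
          (fun P hP => hmeas P (hℳ hP)) (fun P hP P' hP' => hdisj P hP.1 P' hP'.1 hP.2 hP'.2)
          fun Q hQ => (hcover Q hQ).imp fun P hP => ⟨⟨hP.1, hP.2.2⟩, hP.2.1⟩
    _ ≤ A * σ {ζ | lam < maximalFunction 𝒟 b ζ} := by
        gcongr
        rintro ζ ⟨P, ⟨⟨hP𝒟, hPb⟩, -⟩, hζ⟩
        exact hPb.trans_le (le_maximalFunction hP𝒟 hζ)

end Carleson

theorem stmt_16 (X : Type*) [MeasurableSpace X] (σ : Measure X)
    (𝒟 : Set (Set X)) (h𝒟 : 𝒟.Countable) (hmeas : ∀ Q ∈ 𝒟, MeasurableSet Q)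
    (hmax : ∀ 𝒮 : Set (Set X), 𝒮 ⊆ 𝒟 →
      ((∀ P ∈ 𝒮, ∀ P' ∈ 𝒮, (∀ T ∈ 𝒮, P ⊆ T → T = P) → (∀ T ∈ 𝒮, P' ⊆ T → T = P') →
          P ≠ P' → Disjoint P P') ∧
        ∀ Q ∈ 𝒮, ∃ P ∈ 𝒮, Q ⊆ P ∧ ∀ T ∈ 𝒮, P ⊆ T → T = P))
    (a b : Set X → ℝ≥0∞) (A : ℝ≥0∞)
    (hpack : ∀ S ∈ 𝒟, ∑' Q : {Q : Set X // Q ∈ 𝒟 ∧ Q ⊆ S}, a Q.1 ≤ A * σ S) :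
    ∑' Q : 𝒟, a Q.1 * b Q.1 ≤
      A * ∫⁻ ζ, ⨆ Q : {Q : Set X // Q ∈ 𝒟 ∧ ζ ∈ Q}, b Q.1 ∂σ := by
  have : Countable 𝒟 := h𝒟.to_subtype
  have hlevel_anti : Antitone fun t : ℝ => σ {ζ | ENNReal.ofReal t < maximalFunction 𝒟 b ζ} :=
    fun s t hst => measure_mono fun ζ h => (ENNReal.ofReal_le_ofReal hst).trans_lt h
  calc ∑' Q : 𝒟, a Q * b Q
      = ∑' Q : 𝒟, ∫⁻ t in Ioi (0 : ℝ), {Q | ENNReal.ofReal t < b Q}.indicator a Q :=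
        tsum_congr fun Q => (setLIntegral_Ioi_indicator_ofReal_lt (a Q) (b Q)).symm
    _ = ∫⁻ t in Ioi (0 : ℝ), ∑' Q : 𝒟, {Q | ENNReal.ofReal t < b Q}.indicator a Q :=
        (lintegral_tsum fun Q => (measurable_const.indicator
          (measurableSet_lt ENNReal.measurable_ofReal measurable_const)).aemeasurable).symm
    _ ≤ ∫⁻ t in Ioi (0 : ℝ), A * σ {ζ | ENNReal.ofReal t < maximalFunction 𝒟 b ζ} :=
        lintegral_mono fun t =>
          tsum_indicator_lt_le_mul_measure_lt_maximalFunction h𝒟 hmeas hmax hpack b _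
    _ = A * ∫⁻ t in Ioi (0 : ℝ), σ {ζ | ENNReal.ofReal t < maximalFunction 𝒟 b ζ} :=
        lintegral_const_mul A hlevel_anti.measurable
    _ ≤ A * ∫⁻ ζ, maximalFunction 𝒟 b ζ ∂σ := by
        gcongr
        exact setLIntegral_Ioi_measure_ofReal_lt_le_lintegral σ
          (measurable_maximalFunction h𝒟 hmeas b)
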